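/- In the convex polytope S_n with odd n = 2k+1, the distance from a_1 to d_j equals j+2 for 1 ≤ j ≤ k and 2k−j+4 for k+1 ≤ j ≤ 2k+1; in particular diam(S_n) = k+3. -/
import Mathlib


/-- Layers: 0 = a, 1 = b, 2 = c, 3 = d. Vertex `(ℓ, i)` is `ℓ_i` (indices mod `n`). -/
def snRel (n : ℕ) (x y : Fin 4 × ZMod n) : Prop :=
  (x.1 = y.1 ∧ y.2 = x.2 + 1) ∨                                -- cycle edges on each layer
  (x.1 = 0 ∧ y.1 = 1 ∧ (x.2 = y.2 ∨ x.2 = y.2 + 1)) ∨          -- a_i b_i and a_{i+1} b_i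
  (x.1 = 1 ∧ y.1 = 2 ∧ x.2 = y.2) ∨                            -- b_i c_i
  (x.1 = 2 ∧ y.1 = 3 ∧ x.2 = y.2)                              -- c_i d_i

/-- The convex polytope graph `S_n`. -/
def Sn (n : ℕ) : SimpleGraph (Fin 4 × ZMod n) := SimpleGraph.fromRel (snRel n)

def IsLocalResolvingSet {V : Type*} (G : SimpleGraph V) (W : Set V) : Prop :=
  ∀ u v : V, G.Adj u v → ∃ w ∈ W, G.dist u w ≠ G.dist v w

def IsStrongResolvingSet {V : Type*} (G : SimpleGraph V) (S : Set V) : Prop :=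
  ∀ u v : V, u ≠ v → ∃ x ∈ S, G.dist v x = G.dist v u + G.dist u x ∨
    G.dist u x = G.dist u v + G.dist v x

noncomputable def localMetricDim {V : Type*} [Fintype V] (G : SimpleGraph V) : ℕ :=
  sInf {k | ∃ W : Finset V, IsLocalResolvingSet G ↑W ∧ W.card = k}

noncomputable def strongMetricDim {V : Type*} [Fintype V] (G : SimpleGraph V) : ℕ :=
  sInf {k | ∃ S : Finset V, IsStrongResolvingSet G ↑S ∧ S.card = k}

namespace SnAux
def c0 (k : ℕ) (i : ZMod (2*k+1)) : ℕ := min i.val (2*k+1 - i.val)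
lemma c0_lip (k : ℕ) (hk : 1 ≤ k) (i : ZMod (2*k+1)) :
    c0 k (i+1) ≤ c0 k i + 1 ∧ c0 k i ≤ c0 k (i+1) + 1 := by
  haveI : Fact (1 < 2*k+1) := ⟨by omega⟩
  have hm : i.val < 2*k+1 := ZMod.val_lt i
  have hv : (i+1).val = (i.val + 1) % (2*k+1) := by
    rw [ZMod.val_add, ZMod.val_one]
  rcases Nat.lt_or_ge (i.val + 1) (2*k+1) with h | h
  · rw [Nat.mod_eq_of_lt h] at hv; unfold c0; omega
  · have : i.val + 1 = 2*k+1 := by omega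
    rw [this, Nat.mod_self] at hv; unfold c0; omega

lemma c0_natCast (k : ℕ) (m : ℕ) (hm : m < 2*k+1) :
    c0 k (m : ZMod (2*k+1)) = min m (2*k+1 - m) := by
  unfold c0; rw [ZMod.val_natCast_of_lt hm]

def fS (k : ℕ) (x : Fin 4 × ZMod (2*k+1)) : ℕ :=
  if x.1 = 0 then c0 k (x.2 - 1) else x.1.val + min (c0 k x.2) (c0 k (x.2 - 1))

lemma fS_lip (k : ℕ) (hk : 1 ≤ k) :
    ∀ x y, snRel (2*k+1) x y → fS k y ≤ fS k x + 1 ∧ fS k x ≤ fS k y + 1 := by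
  rintro ⟨ℓ, i⟩ ⟨m, j⟩ h
  rcases h with ⟨hl, hj⟩ | ⟨h0, h1, hij⟩ | ⟨h1, h2, hij⟩ | ⟨h2, h3, hij⟩
  · -- cycle edge, j = i+1, m = ℓ
    simp only at hl hj; subst hl; subst hj
    have h1 := c0_lip k hk i
    have h2 := c0_lip k hk (i - 1)
    rw [sub_add_cancel] at h2
    by_cases hℓ : ℓ = 0
    · subst hℓ
      simp only [fS, if_pos rfl, if_true, add_sub_cancel_right]
      omega
    · simp only [fS, if_neg hℓ, add_sub_cancel_right]
      omega
  · simp only at h0 h1; subst h0; subst h1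
    have h2 := c0_lip k hk (j - 1)
    rw [sub_add_cancel] at h2
    rcases hij with hij | hij <;> simp only at hij <;> subst hij <;>
      simp only [fS, if_pos rfl, if_true, if_neg (by decide : (1:Fin 4) ≠ 0),
        add_sub_cancel_right, Fin.val_one] <;> omega
  · simp only at h1 h2 hij; subst h1; subst h2; subst hij
    simp only [fS, if_neg (by decide : (1:Fin 4) ≠ 0), if_neg (by decide : (2:Fin 4) ≠ 0)]
    simp only [Fin.val_one, Fin.val_two]; omega
  · simp only at h2 h3 hij; subst h2; subst h3; subst hij
    simp only [fS, if_neg (by decide : (2:Fin 4) ≠ 0), if_neg (by decide : (3:Fin 4) ≠ 0),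
      Fin.val_two, (show ((3:Fin 4)).val = 3 from rfl)]
    omega

lemma walk_ge (k : ℕ) (hk : 1 ≤ k) {u v : Fin 4 × ZMod (2*k+1)}
    (p : (Sn (2*k+1)).Walk u v) : fS k v ≤ fS k u + p.length := by
  induction p with
  | nil => simp
  | cons h p ih =>
    have h2 : (SimpleGraph.fromRel (snRel (2*k+1))).Adj _ _ := h
    obtain ⟨-, hr | hr⟩ := (SimpleGraph.fromRel_adj _ _ _).mp h2 <;>
    · have := fS_lip k hk _ _ hr
      simp only [SimpleGraph.Walk.length_cons]; omega

lemma fS_a1 (k : ℕ) : fS k ((0 : Fin 4), ((1:ℕ) : ZMod (2*k+1))) = 0 := by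
  simp only [fS, if_pos rfl, if_true]
  norm_num [c0]

lemma edist_lower (k : ℕ) (hk : 1 ≤ k) (v : Fin 4 × ZMod (2*k+1)) :
    ((fS k v : ℕ) : ℕ∞) ≤ (Sn (2*k+1)).edist ((0 : Fin 4), ((1:ℕ) : ZMod (2*k+1))) v := by
  rw [SimpleGraph.edist_eq_sInf]
  apply le_sInf
  rintro x ⟨p, rfl⟩
  have := walk_ge k hk p
  rw [fS_a1] at this
  show ((fS k v : ℕ) : ℕ∞) ≤ (p.length : ℕ∞)
  exact_mod_cast (by omega : fS k v ≤ p.length)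

lemma adj_layer (k : ℕ) (hk : 1 ≤ k) (ℓ : Fin 4) (i : ZMod (2*k+1)) :
    (Sn (2*k+1)).Adj (ℓ, i) (ℓ, i + 1) := by
  haveI : Fact (1 < 2*k+1) := ⟨by omega⟩
  refine (SimpleGraph.fromRel_adj _ _ _).mpr ⟨?_, Or.inl (Or.inl ⟨rfl, rfl⟩)⟩
  intro h
  have : i = i + 1 := congrArg Prod.snd h
  exact one_ne_zero (left_eq_add.mp this)

lemma edist_cycle (k : ℕ) (hk : 1 ≤ k) (ℓ : Fin 4) (i : ZMod (2*k+1)) (m : ℕ) :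
    (Sn (2*k+1)).edist (ℓ, i) (ℓ, i + (m : ZMod (2*k+1))) ≤ (m : ℕ∞) := by
  induction m with
  | zero => simp [SimpleGraph.edist_self]
  | succ m ih =>
    have hadj := adj_layer k hk ℓ (i + (m : ZMod (2*k+1)))
    have step : (Sn (2*k+1)).edist (ℓ, i + (m : ZMod (2*k+1)))
        (ℓ, i + ((m+1 : ℕ) : ZMod (2*k+1))) ≤ 1 := by
      have : i + ((m+1 : ℕ) : ZMod (2*k+1)) = i + (m : ZMod (2*k+1)) + 1 := by
        push_cast; ring
      rw [this]
      exact (SimpleGraph.edist_eq_one_iff_adj.mpr hadj).le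
    calc (Sn (2*k+1)).edist (ℓ, i) (ℓ, i + ((m+1:ℕ) : ZMod (2*k+1)))
        ≤ _ + _ := SimpleGraph.edist_triangle (v := (ℓ, i + (m : ZMod (2*k+1))))
      _ ≤ (m : ℕ∞) + 1 := add_le_add ih step
      _ = ((m+1 : ℕ) : ℕ∞) := by push_cast; ring

lemma ne_layer {a b : Fin 4} (h : a ≠ b) (i j : ZMod (2*k+1)) : (a, i) ≠ (b, j) := by
  intro hh; exact h (congrArg Prod.fst hh)

lemma adj_ab0 (k : ℕ) (i : ZMod (2*k+1)) : (Sn (2*k+1)).Adj (0, i) (1, i) :=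
  (SimpleGraph.fromRel_adj _ _ _).mpr
    ⟨ne_layer (by decide) _ _, Or.inl (Or.inr (Or.inl ⟨rfl, rfl, Or.inl rfl⟩))⟩

lemma adj_ab1 (k : ℕ) (j : ZMod (2*k+1)) : (Sn (2*k+1)).Adj (0, j + 1) (1, j) :=
  (SimpleGraph.fromRel_adj _ _ _).mpr
    ⟨ne_layer (by decide) _ _, Or.inl (Or.inr (Or.inl ⟨rfl, rfl, Or.inr rfl⟩))⟩

lemma adj_bc (k : ℕ) (i : ZMod (2*k+1)) : (Sn (2*k+1)).Adj (1, i) (2, i) :=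
  (SimpleGraph.fromRel_adj _ _ _).mpr
    ⟨ne_layer (by decide) _ _, Or.inl (Or.inr (Or.inr (Or.inl ⟨rfl, rfl, rfl⟩)))⟩

lemma adj_cd (k : ℕ) (i : ZMod (2*k+1)) : (Sn (2*k+1)).Adj (2, i) (3, i) :=
  (SimpleGraph.fromRel_adj _ _ _).mpr
    ⟨ne_layer (by decide) _ _, Or.inl (Or.inr (Or.inr (Or.inr ⟨rfl, rfl, rfl⟩)))⟩

lemma estep {k : ℕ} {u v : Fin 4 × ZMod (2*k+1)} (h : (Sn (2*k+1)).Adj u v) :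
    (Sn (2*k+1)).edist u v ≤ 1 :=
  (SimpleGraph.edist_eq_one_iff_adj.mpr h).le

lemma edist_bd (k : ℕ) (i : ZMod (2*k+1)) :
    (Sn (2*k+1)).edist (1, i) (3, i) ≤ 2 :=
  calc (Sn (2*k+1)).edist (1, i) (3, i)
      ≤ _ + _ := SimpleGraph.edist_triangle (v := ((2 : Fin 4), i))
    _ ≤ 1 + 1 := add_le_add (estep (adj_bc k i)) (estep (adj_cd k i))
    _ = 2 := by norm_num

lemma edist_a1b (k : ℕ) (i : ZMod (2*k+1)) (h : ((1:ℕ) : ZMod (2*k+1)) = i ∨ ((1:ℕ) : ZMod (2*k+1)) = i + 1) :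
    (Sn (2*k+1)).edist ((0 : Fin 4), ((1:ℕ) : ZMod (2*k+1))) (1, i) ≤ 1 := by
  rcases h with h | h
  · rw [h]; exact estep (adj_ab0 k i)
  · rw [h]; exact estep (adj_ab1 k i)

lemma edist_a1d (k : ℕ) (i : ZMod (2*k+1))
    (h : ((1:ℕ) : ZMod (2*k+1)) = i ∨ ((1:ℕ) : ZMod (2*k+1)) = i + 1) :
    (Sn (2*k+1)).edist ((0 : Fin 4), ((1:ℕ) : ZMod (2*k+1))) (3, i) ≤ 3 :=
  calc (Sn (2*k+1)).edist ((0 : Fin 4), ((1:ℕ) : ZMod (2*k+1))) (3, i)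
      ≤ _ + _ := SimpleGraph.edist_triangle (v := ((1 : Fin 4), i))
    _ ≤ 1 + 2 := add_le_add (edist_a1b k i h) (edist_bd k i)
    _ = 3 := by norm_num

lemma edist_up (k : ℕ) (hk : 1 ≤ k) (m : ℕ) :
    (Sn (2*k+1)).edist ((0 : Fin 4), ((1:ℕ) : ZMod (2*k+1)))
      (3, ((1:ℕ) : ZMod (2*k+1)) + (m : ZMod (2*k+1))) ≤ ((3 + m : ℕ) : ℕ∞) :=
  calc (Sn (2*k+1)).edist _ _
      ≤ _ + _ := SimpleGraph.edist_triangle (v := ((3 : Fin 4), ((1:ℕ) : ZMod (2*k+1))))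
    _ ≤ 3 + (m : ℕ∞) := add_le_add (edist_a1d k _ (Or.inl rfl)) (edist_cycle k hk 3 _ m)
    _ = ((3 + m : ℕ) : ℕ∞) := by push_cast; ring

lemma edist_down (k : ℕ) (hk : 1 ≤ k) (m : ℕ) :
    (Sn (2*k+1)).edist ((0 : Fin 4), ((1:ℕ) : ZMod (2*k+1)))
      (3, -(m : ZMod (2*k+1))) ≤ ((3 + m : ℕ) : ℕ∞) := by
  have h1 : (Sn (2*k+1)).edist ((3:Fin 4), (0 : ZMod (2*k+1))) (3, -(m : ZMod (2*k+1))) ≤ (m : ℕ∞) := by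
    rw [SimpleGraph.edist_comm]
    have := edist_cycle k hk 3 (-(m : ZMod (2*k+1))) m
    simpa using this
  calc (Sn (2*k+1)).edist _ _
      ≤ _ + _ := SimpleGraph.edist_triangle (v := ((3 : Fin 4), (0 : ZMod (2*k+1))))
    _ ≤ 3 + (m : ℕ∞) := add_le_add (edist_a1d k 0 (Or.inr (by push_cast; ring))) h1
    _ = ((3 + m : ℕ) : ℕ∞) := by push_cast; ring

lemma edist_same_layer (k : ℕ) (hk : 1 ≤ k) (ℓ : Fin 4) (i j : ZMod (2*k+1)) :
    (Sn (2*k+1)).edist (ℓ, i) (ℓ, j) ≤ ((k : ℕ) : ℕ∞) := by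
  haveI : NeZero (2*k+1) := ⟨by omega⟩
  set d := (j - i).val with hd
  have hdlt : d < 2*k+1 := ZMod.val_lt _
  have hcast : ((d : ℕ) : ZMod (2*k+1)) = j - i := ZMod.natCast_rightInverse _
  rcases le_or_gt d k with h | h
  · have : i + ((d : ℕ) : ZMod (2*k+1)) = j := by rw [hcast]; ring
    calc (Sn (2*k+1)).edist (ℓ, i) (ℓ, j)
        = (Sn (2*k+1)).edist (ℓ, i) (ℓ, i + ((d:ℕ) : ZMod (2*k+1))) := by rw [this]
      _ ≤ (d : ℕ∞) := edist_cycle k hk ℓ i d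
      _ ≤ ((k:ℕ) : ℕ∞) := by exact_mod_cast h
  · have hle : 2*k+1-d ≤ k := by omega
    have : j + (((2*k+1-d) : ℕ) : ZMod (2*k+1)) = i := by
      have hN : ((2*k+1 : ℕ) : ZMod (2*k+1)) = 0 := ZMod.natCast_self _
      rw [Nat.cast_sub hdlt.le, hN, hcast]; ring
    calc (Sn (2*k+1)).edist (ℓ, i) (ℓ, j)
        = (Sn (2*k+1)).edist (ℓ, j) (ℓ, j + (((2*k+1-d):ℕ) : ZMod (2*k+1))) := by
          rw [this, SimpleGraph.edist_comm]
      _ ≤ ((2*k+1-d : ℕ) : ℕ∞) := edist_cycle k hk ℓ j _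
      _ ≤ ((k:ℕ) : ℕ∞) := by exact_mod_cast hle

def tB : Fin 4 → ℕ := ![1, 0, 1, 2]

lemma edist_to_b (k : ℕ) (hk : 1 ≤ k) (ℓ : Fin 4) (i : ZMod (2*k+1)) :
    (Sn (2*k+1)).edist (ℓ, i) (1, i) ≤ ((tB ℓ : ℕ) : ℕ∞) := by
  fin_cases ℓ
  · simpa [tB] using estep (adj_ab0 k i)
  · simp [tB, SimpleGraph.edist_self]
  · simpa [tB] using (SimpleGraph.edist_comm ▸ estep (adj_bc k i) :
      (Sn (2*k+1)).edist ((2:Fin 4), i) (1, i) ≤ 1)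
  · simpa [tB] using (SimpleGraph.edist_comm ▸ edist_bd k i :
      (Sn (2*k+1)).edist ((3:Fin 4), i) (1, i) ≤ 2)

lemma edist_le_all (k : ℕ) (hk : 1 ≤ k) (u v : Fin 4 × ZMod (2*k+1)) :
    (Sn (2*k+1)).edist u v ≤ ((k + 3 : ℕ) : ℕ∞) := by
  obtain ⟨ℓ, i⟩ := u
  obtain ⟨m, j⟩ := v
  by_cases h33 : ℓ = 3 ∧ m = 3
  · obtain ⟨rfl, rfl⟩ := h33
    calc (Sn (2*k+1)).edist (3, i) (3, j) ≤ ((k:ℕ) : ℕ∞) := edist_same_layer k hk 3 i j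
      _ ≤ ((k+3:ℕ) : ℕ∞) := by exact_mod_cast Nat.le_add_right k 3
  · have htb : tB ℓ + tB m ≤ 3 := by
      fin_cases ℓ <;> fin_cases m <;> simp_all [tB]
    calc (Sn (2*k+1)).edist (ℓ, i) (m, j)
        ≤ (Sn (2*k+1)).edist (ℓ, i) (1, i) + (Sn (2*k+1)).edist (1, i) (m, j) :=
          SimpleGraph.edist_triangle
      _ ≤ (Sn (2*k+1)).edist (ℓ, i) (1, i) +
          ((Sn (2*k+1)).edist (1, i) (1, j) + (Sn (2*k+1)).edist (1, j) (m, j)) := by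
          gcongr; exact SimpleGraph.edist_triangle
      _ ≤ ((tB ℓ : ℕ) : ℕ∞) + (((k:ℕ) : ℕ∞) + ((tB m : ℕ) : ℕ∞)) := by
          gcongr
          · exact edist_to_b k hk ℓ i
          · exact edist_same_layer k hk 1 i j
          · rw [SimpleGraph.edist_comm]; exact edist_to_b k hk m j
      _ ≤ ((k+3:ℕ) : ℕ∞) := by
          rw [← Nat.cast_add, ← Nat.cast_add]
          exact_mod_cast (by omega : tB ℓ + (k + tB m) ≤ k + 3)

lemma fval (k : ℕ) (j : ℕ) (h1 : 1 ≤ j) (h2 : j ≤ 2*k) :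
    fS k ((3 : Fin 4), (j : ZMod (2*k+1))) =
      3 + min (min j (2*k+1-j)) (min (j-1) (2*k+1-(j-1))) := by
  have hsub : ((j : ZMod (2*k+1)) - 1) = ((j-1 : ℕ) : ZMod (2*k+1)) := by
    rw [Nat.cast_sub h1]; push_cast; ring
  simp only [fS, if_neg (by decide : (3 : Fin 4) ≠ 0), (show ((3:Fin 4)).val = 3 from rfl)]
  rw [hsub, c0_natCast k j (by omega), c0_natCast k (j-1) (by omega)]

lemma fS_d_ge (k : ℕ) (x : ZMod (2*k+1)) : 3 ≤ fS k ((3 : Fin 4), x) := by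
  simp only [fS, if_neg (by decide : (3 : Fin 4) ≠ 0), (show ((3:Fin 4)).val = 3 from rfl)]
  omega

lemma edist_val1 (k : ℕ) (hk : 1 ≤ k) (j : ℕ) (h1 : 1 ≤ j) (h2 : j ≤ k) :
    (Sn (2*k+1)).edist ((0 : Fin 4), ((1:ℕ) : ZMod (2*k+1))) (3, (j : ZMod (2*k+1)))
      = ((j + 2 : ℕ) : ℕ∞) := by
  refine le_antisymm ?_ ?_
  · have := edist_up k hk (j-1)
    have hc : ((1:ℕ) : ZMod (2*k+1)) + ((j-1 : ℕ) : ZMod (2*k+1)) = (j : ZMod (2*k+1)) := by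
      rw [← Nat.cast_add]; congr 1; omega
    rw [hc] at this
    have : (Sn (2*k+1)).edist _ _ ≤ ((3 + (j-1) : ℕ) : ℕ∞) := this
    rwa [(show 3 + (j-1) = j + 2 by omega)] at this
  · have hl := edist_lower k hk ((3 : Fin 4), (j : ZMod (2*k+1)))
    rw [fval k j h1 (by omega)] at hl
    have : 3 + min (min j (2*k+1-j)) (min (j-1) (2*k+1-(j-1))) = j + 2 := by omega
    rwa [this] at hl

lemma edist_val2 (k : ℕ) (hk : 1 ≤ k) (j : ℕ) (h1 : k + 1 ≤ j) (h2 : j ≤ 2*k+1) :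
    (Sn (2*k+1)).edist ((0 : Fin 4), ((1:ℕ) : ZMod (2*k+1))) (3, (j : ZMod (2*k+1)))
      = ((2*k + 4 - j : ℕ) : ℕ∞) := by
  refine le_antisymm ?_ ?_
  · have := edist_down k hk (2*k+1-j)
    have hc : -(((2*k+1-j : ℕ)) : ZMod (2*k+1)) = (j : ZMod (2*k+1)) := by
      rw [Nat.cast_sub h2, ZMod.natCast_self]; ring
    rw [hc] at this
    rwa [(show 3 + (2*k+1-j) = 2*k+4-j by omega)] at this
  · have hl := edist_lower k hk ((3 : Fin 4), (j : ZMod (2*k+1)))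
    rcases eq_or_lt_of_le h2 with rfl | hlt
    · have h3 : 3 ≤ fS k ((3 : Fin 4), ((2*k+1 : ℕ) : ZMod (2*k+1))) := fS_d_ge k _
      rw [(show 2*k+4-(2*k+1) = 3 by omega)]
      exact le_trans (by exact_mod_cast h3) hl
    · rw [fval k j (by omega) (by omega)] at hl
      have : 3 + min (min j (2*k+1-j)) (min (j-1) (2*k+1-(j-1))) = 2*k+4-j := by omega
      rwa [this] at hl

theorem dist_a1_dj_Sn_odd' (k : ℕ) (hk : 1 ≤ k) :
    (∀ j : ℕ, 1 ≤ j → j ≤ k →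
      (Sn (2 * k + 1)).dist ((0 : Fin 4), ((1 : ℕ) : ZMod (2 * k + 1)))
        ((3 : Fin 4), (j : ZMod (2 * k + 1))) = j + 2) ∧
    (∀ j : ℕ, k + 1 ≤ j → j ≤ 2 * k + 1 →
      (Sn (2 * k + 1)).dist ((0 : Fin 4), ((1 : ℕ) : ZMod (2 * k + 1)))
        ((3 : Fin 4), (j : ZMod (2 * k + 1))) = 2 * k + 4 - j) ∧
    (Sn (2 * k + 1)).diam = k + 3 := by
  refine ⟨fun j h1 h2 => ?_, fun j h1 h2 => ?_, ?_⟩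
  · show ((Sn (2*k+1)).edist _ _).toNat = j + 2
    rw [edist_val1 k hk j h1 h2]; exact ENat.toNat_coe _
  · show ((Sn (2*k+1)).edist _ _).toNat = 2*k + 4 - j
    rw [edist_val2 k hk j h1 h2]; exact ENat.toNat_coe _
  · have hup : (Sn (2*k+1)).ediam ≤ ((k+3 : ℕ) : ℕ∞) :=
      SimpleGraph.ediam_le_of_edist_le (edist_le_all k hk)
    have hlow : ((k+3 : ℕ) : ℕ∞) ≤ (Sn (2*k+1)).ediam := by
      have := edist_val2 k hk (k+1) (le_refl _) (by omega)
      rw [(show 2*k+4-(k+1) = k+3 by omega)] at this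
      exact this ▸ SimpleGraph.edist_le_ediam
    have : (Sn (2*k+1)).ediam = ((k+3 : ℕ) : ℕ∞) := le_antisymm hup hlow
    show (Sn (2*k+1)).ediam.toNat = k + 3
    rw [this]; exact ENat.toNat_coe _

end SnAux

theorem dist_a1_dj_Sn_odd (k : ℕ) (hk : 1 ≤ k) :
    (∀ j : ℕ, 1 ≤ j → j ≤ k →
      (Sn (2 * k + 1)).dist ((0 : Fin 4), ((1 : ℕ) : ZMod (2 * k + 1)))
        ((3 : Fin 4), (j : ZMod (2 * k + 1))) = j + 2) ∧
    (∀ j : ℕ, k + 1 ≤ j → j ≤ 2 * k + 1 →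
      (Sn (2 * k + 1)).dist ((0 : Fin 4), ((1 : ℕ) : ZMod (2 * k + 1)))
        ((3 : Fin 4), (j : ZMod (2 * k + 1))) = 2 * k + 4 - j) ∧
    (Sn (2 * k + 1)).diam = k + 3 := by
  exact SnAux.dist_a1_dj_Sn_odd' k hk
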